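/- Given a function f : Σ₁* → Σ₂* in FL and a depth-susceptible k-sda M over Σ₂ running in polynomial time, the language L = { x ∈ Σ₁* : f(x) ∈ L(M) } is recognized by some logarithmic-space auxiliary depth-k storage automaton in polynomial time. -/

import Mathlib

/-!
Formalization infrastructure for depth-`k` storage automata (k-sda's),
following T. Yamakami, "Between SC and LOGDCFL: Families of Languages
Accepted by Logarithmic-Space Deterministic Auxiliary Depth-k Storage
Automata".
-/

namespace SDAP

/-- Head directions. -/
inductive Dir | left | stay | right
deriving DecidableEq

/-- Input-tape symbols: the two endmarkers `▷`, `◁` or a genuine symbol. -/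
inductive InSym (α : Type) | lend | rend | sym (a : α)

/-- Move a head position on a semi-infinite tape (clamped at `0`). -/
def moveNat (p : ℕ) : Dir → ℕ
  | Dir.left => p - 1
  | Dir.stay => p
  | Dir.right => p + 1

/-- Move the input head, clamped to the segment `[0, n+1]` holding `▷ x ◁`. -/
def moveIn (n p : ℕ) (d : Dir) : ℕ := min (moveNat p d) (n + 1)

/-- Symbol at position `i` of the input tape holding `▷ x ◁`. -/
def inAt {α : Type} (x : List α) (i : ℕ) : InSym α :=
  if i = 0 then InSym.lend
  else if h : i - 1 < x.length then InSym.sym (x.get ⟨i - 1, h⟩)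
  else InSym.rend

/-! ### One-way deterministic depth-`k` storage automata (k-sda's) -/

/-- Output of one transition of a k-sda. -/
structure SDAOut (Q G : ℕ) where
  st : Fin Q
  wr : Fin G
  dIn : Dir
  dSt : Dir

/-- A one-way deterministic depth-`k` storage automaton: a read-once input
tape and a depth-`k` storage tape with storage alphabet `Fin G` graded by
the depth function `dv`. -/
structure SDA (k : ℕ) (α : Type) where
  Q : ℕ
  G : ℕ
  dv : Fin G → ℕ
  box : Fin G      -- the initial blank `□`, depth 0
  blank : Fin G    -- the frozen blank `B`, depth k
  lend : Fin G     -- the left endmarker `▷` of the storage tape, depth k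
  q0 : Fin Q
  qacc : Finset (Fin Q)
  qrej : Finset (Fin Q)
  δ : Fin Q → InSym α → Fin G → SDAOut Q G

namespace SDA

variable {k : ℕ} {α : Type}

structure Cfg (M : SDA k α) where
  st : Fin M.Q
  ip : ℕ
  sp : ℕ
  tape : ℕ → Fin M.G

def init (M : SDA k α) : M.Cfg :=
  ⟨M.q0, 0, 0, fun i => if i = 0 then M.lend else M.box⟩

def Halted (M : SDA k α) (c : M.Cfg) : Prop := c.st ∈ M.qacc ∨ c.st ∈ M.qrej

def step (M : SDA k α) (x : List α) (c : M.Cfg) : M.Cfg :=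
  if c.st ∈ M.qacc ∨ c.st ∈ M.qrej then c
  else
    let t := M.δ c.st (inAt x c.ip) (c.tape c.sp)
    ⟨t.st, moveIn x.length c.ip t.dIn, moveNat c.sp t.dSt,
      Function.update c.tape c.sp t.wr⟩

def run (M : SDA k α) (x : List α) (t : ℕ) : M.Cfg := (M.step x)^[t] M.init

def Accepts (M : SDA k α) (x : List α) : Prop := ∃ t, (M.run x t).st ∈ M.qacc

def Rejects (M : SDA k α) (x : List α) : Prop := ∃ t, (M.run x t).st ∈ M.qrej

def Halts (M : SDA k α) (x : List α) : Prop := ∃ t, M.Halted (M.run x t)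

def Recognizes (M : SDA k α) (L : Language α) : Prop :=
  ∀ x, (x ∈ L ↔ M.Accepts x) ∧ (x ∉ L ↔ M.Rejects x)

def lang (M : SDA k α) : Language α := {x | M.Accepts x}

/-- `M` halts within polynomial time on every input. -/
def PolyTime (M : SDA k α) : Prop :=
  ∃ c : ℕ, ∀ x : List α, ∃ t ≤ c * x.length ^ c + c, M.Halted (M.run x t)

/-- Structural well-formedness: graded storage alphabet, read-once
(one-way) input head, and the depth-`k` requirement on the storage tape
(passing through a symbol of depth `e < k` raises its depth by `1`, and
by `2` at a turn, capped at `k`; depth-`k` symbols are frozen). Because the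
depth alphabets are mutually disjoint, the direction from which the head
arrived is encoded in the parity of the depth. -/
def WellFormed (M : SDA k α) : Prop :=
  (∀ s, M.dv s ≤ k) ∧ M.dv M.box = 0 ∧ M.dv M.blank = k ∧ M.dv M.lend = k ∧
  M.blank ≠ M.lend ∧
  ∀ q σ γ,
    ((M.δ q σ γ).dIn ≠ Dir.left) ∧
    ((M.δ q σ γ).wr = M.lend ↔ γ = M.lend) ∧
    (γ = M.lend → (M.δ q σ γ).dSt ≠ Dir.left) ∧
    (M.dv γ = k → (M.δ q σ γ).wr = γ) ∧
    ((M.δ q σ γ).dSt = Dir.stay → (M.δ q σ γ).wr = γ) ∧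
    (M.dv γ < k → (M.δ q σ γ).dSt = Dir.right →
      M.dv (M.δ q σ γ).wr = min (M.dv γ + if Even (M.dv γ) then 1 else 2) k) ∧
    (M.dv γ < k → (M.δ q σ γ).dSt = Dir.left →
      M.dv (M.δ q σ γ).wr = min (M.dv γ + if Even (M.dv γ) then 2 else 1) k) ∧
    (M.dv (M.δ q σ γ).wr = k → (M.δ q σ γ).wr = M.lend ∨ (M.δ q σ γ).wr = M.blank)

/-- Depth-susceptibility: while scanning a storage symbol of depth
`≥ k-1` the input head is stationary, and while scanning the frozen
blank the inner state does not change. -/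
def DepthSusceptible (M : SDA k α) : Prop :=
  ∀ q σ γ,
    (k - 1 ≤ M.dv γ → (M.δ q σ γ).dIn = Dir.stay) ∧
    (γ = M.blank → (M.δ q σ γ).st = q)

end SDA

/-- The family `kSDA` of languages recognized by depth-susceptible k-sda's. -/
def kSDA (k : ℕ) (α : Type) : Set (Language α) :=
  {L | ∃ M : SDA k α, M.WellFormed ∧ M.DepthSusceptible ∧ M.Recognizes L}

/-- The family `kSDA_imm` of languages recognized by polynomial-time
depth-immune k-sda's (no behavioral restriction at high-depth symbols). -/
def kSDAimm (k : ℕ) (α : Type) : Set (Language α) :=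
  {L | ∃ M : SDA k α, M.WellFormed ∧ M.PolyTime ∧ M.Recognizes L}

/-! ### One-way deterministic pushdown automata and DCFL -/

/-- A deterministic pushdown automaton (acceptance by final state with the
whole input consumed). `δε` gives ε-moves, `δ` gives reading moves; on a
transition the top stack symbol is replaced by a string. -/
structure DPDA (α : Type) where
  Q : ℕ
  G : ℕ
  q0 : Fin Q
  Z0 : Fin G
  qacc : Finset (Fin Q)
  δε : Fin Q → Fin G → Option (Fin Q × List (Fin G))
  δ : Fin Q → α → Fin G → Option (Fin Q × List (Fin G))

namespace DPDA

variable {α : Type}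

structure Cfg (P : DPDA α) where
  st : Fin P.Q
  input : List α
  stack : List (Fin P.G)

def init (P : DPDA α) (x : List α) : P.Cfg := ⟨P.q0, x, [P.Z0]⟩

def step (P : DPDA α) (c : P.Cfg) : P.Cfg :=
  match c.stack with
  | [] => c
  | Z :: ζ =>
    match P.δε c.st Z with
    | some (p, γ) => ⟨p, c.input, γ ++ ζ⟩
    | none =>
      match c.input with
      | [] => c
      | a :: w =>
        match P.δ c.st a Z with
        | some (p, γ) => ⟨p, w, γ ++ ζ⟩
        | none => c

/-- Determinism: an ε-move and a reading move are never both available. -/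
def Deterministic (P : DPDA α) : Prop :=
  ∀ q Z, (P.δε q Z).isSome → ∀ a, P.δ q a Z = none

def Accepts (P : DPDA α) (x : List α) : Prop :=
  ∃ t, (P.step^[t] (P.init x)).input = [] ∧ (P.step^[t] (P.init x)).st ∈ P.qacc

end DPDA

/-- The deterministic context-free languages. -/
def DCFL (α : Type) : Set (Language α) :=
  {L | ∃ P : DPDA α, P.Deterministic ∧ ∀ x, x ∈ L ↔ P.Accepts x}

/-! ### Offline deterministic Turing machines; SC^k and P -/

structure TMOut (Q W : ℕ) where
  st : Fin Q
  wr : Fin W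
  dIn : Dir
  dW : Dir

/-- A deterministic Turing machine with a two-way read-only input tape and
one semi-infinite rewritable work tape. -/
structure OffTM (α : Type) where
  Q : ℕ
  W : ℕ
  q0 : Fin Q
  blank : Fin W
  qacc : Finset (Fin Q)
  qrej : Finset (Fin Q)
  δ : Fin Q → InSym α → Fin W → TMOut Q W

namespace OffTM

variable {α : Type}

structure Cfg (M : OffTM α) where
  st : Fin M.Q
  ip : ℕ
  wp : ℕ
  w : ℕ → Fin M.W

def init (M : OffTM α) : M.Cfg := ⟨M.q0, 0, 0, fun _ => M.blank⟩

def Halted (M : OffTM α) (c : M.Cfg) : Prop := c.st ∈ M.qacc ∨ c.st ∈ M.qrej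

def step (M : OffTM α) (x : List α) (c : M.Cfg) : M.Cfg :=
  if c.st ∈ M.qacc ∨ c.st ∈ M.qrej then c
  else
    let t := M.δ c.st (inAt x c.ip) (c.w c.wp)
    ⟨t.st, moveIn x.length c.ip t.dIn, moveNat c.wp t.dW,
      Function.update c.w c.wp t.wr⟩

def run (M : OffTM α) (x : List α) (t : ℕ) : M.Cfg := (M.step x)^[t] M.init

def Accepts (M : OffTM α) (x : List α) : Prop := ∃ t, (M.run x t).st ∈ M.qacc

end OffTM

/-- Steve's class `SC^k`: languages decided by deterministic Turing machines
simultaneously in polynomial time and `O(log^k n)` space. -/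
def SCk (k : ℕ) (α : Type) : Set (Language α) :=
  {L | ∃ M : OffTM α, ∃ c : ℕ,
    (∀ x : List α, ∃ t ≤ c * x.length ^ c + c, M.Halted (M.run x t)) ∧
    (∀ x, x ∈ L ↔ M.Accepts x) ∧
    (∀ (x : List α) (t : ℕ), (M.run x t).wp + 1 ≤ c * (Nat.log 2 x.length) ^ k + c)}

/-- `SC = ⋃_{k ≥ 1} SC^k`. -/
def SC (α : Type) : Set (Language α) := {L | ∃ k, 1 ≤ k ∧ L ∈ SCk k α}

/-- Polynomial time. -/
def Pclass (α : Type) : Set (Language α) :=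
  {L | ∃ M : OffTM α, ∃ c : ℕ,
    (∀ x : List α, ∃ t ≤ c * x.length ^ c + c, M.Halted (M.run x t)) ∧
    (∀ x, x ∈ L ↔ M.Accepts x)}

/-! ### Function transducers; FL and logspace many-one reductions -/

structure TTMOut (Q W : ℕ) (β : Type) where
  st : Fin Q
  wr : Fin W
  dIn : Dir
  dW : Dir
  out : Option β

/-- A deterministic Turing machine computing a function: a two-way read-only
input tape, one work tape, and a write-once output tape. -/
structure TransTM (α β : Type) where
  Q : ℕ
  W : ℕ
  q0 : Fin Q
  blank : Fin W
  qhalt : Finset (Fin Q)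
  δ : Fin Q → InSym α → Fin W → TTMOut Q W β

namespace TransTM

variable {α β : Type}

structure Cfg (M : TransTM α β) where
  st : Fin M.Q
  ip : ℕ
  wp : ℕ
  w : ℕ → Fin M.W
  out : List β

def init (M : TransTM α β) : M.Cfg := ⟨M.q0, 0, 0, fun _ => M.blank, []⟩

def step (M : TransTM α β) (x : List α) (c : M.Cfg) : M.Cfg :=
  if c.st ∈ M.qhalt then c
  else
    let t := M.δ c.st (inAt x c.ip) (c.w c.wp)
    ⟨t.st, moveIn x.length c.ip t.dIn, moveNat c.wp t.dW,
      Function.update c.w c.wp t.wr, c.out ++ t.out.toList⟩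

def run (M : TransTM α β) (x : List α) (t : ℕ) : M.Cfg := (M.step x)^[t] M.init

def Computes (M : TransTM α β) (f : List α → List β) : Prop :=
  ∀ x, ∃ t, (M.run x t).st ∈ M.qhalt ∧ (M.run x t).out = f x

def PolyTime (M : TransTM α β) : Prop :=
  ∃ c : ℕ, ∀ x : List α, ∃ t ≤ c * x.length ^ c + c, (M.run x t).st ∈ M.qhalt

def LogSpace (M : TransTM α β) : Prop :=
  ∃ c : ℕ, ∀ (x : List α) (t : ℕ), (M.run x t).wp + 1 ≤ c * Nat.log 2 x.length + c

end TransTM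

/-- `FL`: functions computable in polynomial time and `O(log n)` space. -/
def InFL {α β : Type} (f : List α → List β) : Prop :=
  ∃ M : TransTM α β, M.Computes f ∧ M.PolyTime ∧ M.LogSpace

/-- Logarithmic-space many-one reducibility `≤^L_m`. -/
def LmRed {α β : Type} (L₁ : Language α) (L₂ : Language β) : Prop :=
  ∃ f : List α → List β, InFL f ∧ ∀ x, x ∈ L₁ ↔ f x ∈ L₂

/-- `LOGkSDA`: the closure of `kSDA` under `≤^L_m` (targets over a finite
alphabet, w.l.o.g. `Fin m`). -/
def LOGkSDA (k : ℕ) (α : Type) : Set (Language α) :=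
  {A | ∃ m : ℕ, ∃ B ∈ kSDA k (Fin m), LmRed A B}

/-- `LOGkSDA_imm`: the closure of `kSDA_imm` under `≤^L_m`. -/
def LOGkSDAimm (k : ℕ) (α : Type) : Set (Language α) :=
  {A | ∃ m : ℕ, ∃ B ∈ kSDAimm k (Fin m), LmRed A B}

/-- `LOGDCFL`: the closure of `DCFL` under `≤^L_m`. -/
def LOGDCFL (α : Type) : Set (Language α) :=
  {A | ∃ m : ℕ, ∃ B ∈ DCFL (Fin m), LmRed A B}

/-! ### Deterministic auxiliary depth-`k` storage automata -/

structure AuxOut (Q W G : ℕ) where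
  st : Fin Q
  wrW : Fin W
  wrG : Fin G
  dIn : Dir
  dW : Dir
  dSt : Dir

/-- A deterministic auxiliary depth-`k` storage automaton: a two-way
read-only input tape, a rewritable auxiliary work tape, and a depth-`k`
storage tape. -/
structure AuxSDA (k : ℕ) (α : Type) where
  Q : ℕ
  W : ℕ
  G : ℕ
  dv : Fin G → ℕ
  box : Fin G
  blank : Fin G
  lend : Fin G
  wblank : Fin W
  q0 : Fin Q
  qacc : Finset (Fin Q)
  qrej : Finset (Fin Q)
  δ : Fin Q → InSym α → Fin W → Fin G → AuxOut Q W G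

namespace AuxSDA

variable {k : ℕ} {α : Type}

structure Cfg (M : AuxSDA k α) where
  st : Fin M.Q
  ip : ℕ
  wp : ℕ
  sp : ℕ
  w : ℕ → Fin M.W
  tape : ℕ → Fin M.G

def init (M : AuxSDA k α) : M.Cfg :=
  ⟨M.q0, 0, 0, 0, fun _ => M.wblank, fun i => if i = 0 then M.lend else M.box⟩

def Halted (M : AuxSDA k α) (c : M.Cfg) : Prop := c.st ∈ M.qacc ∨ c.st ∈ M.qrej

def step (M : AuxSDA k α) (x : List α) (c : M.Cfg) : M.Cfg :=
  if c.st ∈ M.qacc ∨ c.st ∈ M.qrej then c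
  else
    let t := M.δ c.st (inAt x c.ip) (c.w c.wp) (c.tape c.sp)
    ⟨t.st, moveIn x.length c.ip t.dIn, moveNat c.wp t.dW, moveNat c.sp t.dSt,
      Function.update c.w c.wp t.wrW, Function.update c.tape c.sp t.wrG⟩

def run (M : AuxSDA k α) (x : List α) (t : ℕ) : M.Cfg := (M.step x)^[t] M.init

def Accepts (M : AuxSDA k α) (x : List α) : Prop := ∃ t, (M.run x t).st ∈ M.qacc

def Rejects (M : AuxSDA k α) (x : List α) : Prop := ∃ t, (M.run x t).st ∈ M.qrej

def Recognizes (M : AuxSDA k α) (L : Language α) : Prop :=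
  ∀ x, (x ∈ L ↔ M.Accepts x) ∧ (x ∉ L ↔ M.Rejects x)

def PolyTime (M : AuxSDA k α) : Prop :=
  ∃ c : ℕ, ∀ x : List α, ∃ t ≤ c * x.length ^ c + c, M.Halted (M.run x t)

/-- The auxiliary work tape uses only `O(log n)` cells. -/
def LogSpace (M : AuxSDA k α) : Prop :=
  ∃ c : ℕ, ∀ (x : List α) (t : ℕ), (M.run x t).wp + 1 ≤ c * Nat.log 2 x.length + c

/-- Structural well-formedness: the depth-`k` requirement on the storage
tape and the stationary requirement. -/
def WellFormed (M : AuxSDA k α) : Prop :=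
  (∀ s, M.dv s ≤ k) ∧ M.dv M.box = 0 ∧ M.dv M.blank = k ∧ M.dv M.lend = k ∧
  M.blank ≠ M.lend ∧
  ∀ q σ τ γ,
    ((M.δ q σ τ γ).wrG = M.lend ↔ γ = M.lend) ∧
    (γ = M.lend → (M.δ q σ τ γ).dSt ≠ Dir.left) ∧
    (M.dv γ = k → (M.δ q σ τ γ).wrG = γ) ∧
    ((M.δ q σ τ γ).dSt = Dir.stay → (M.δ q σ τ γ).wrG = γ) ∧
    ((M.δ q σ τ γ).dW = Dir.stay → (M.δ q σ τ γ).wrW = τ) ∧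
    (M.dv γ < k → (M.δ q σ τ γ).dSt = Dir.right →
      M.dv (M.δ q σ τ γ).wrG = min (M.dv γ + if Even (M.dv γ) then 1 else 2) k) ∧
    (M.dv γ < k → (M.δ q σ τ γ).dSt = Dir.left →
      M.dv (M.δ q σ τ γ).wrG = min (M.dv γ + if Even (M.dv γ) then 2 else 1) k) ∧
    (M.dv (M.δ q σ τ γ).wrG = k →
      (M.δ q σ τ γ).wrG = M.lend ∨ (M.δ q σ τ γ).wrG = M.blank)

/-- Depth-susceptibility for auxiliary machines: while scanning a storage
symbol of depth `≥ k-1`, both the input head and the auxiliary head are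
stationary; while scanning the frozen blank, the inner state is unchanged. -/
def DepthSusceptible (M : AuxSDA k α) : Prop :=
  ∀ q σ τ γ,
    (k - 1 ≤ M.dv γ → (M.δ q σ τ γ).dIn = Dir.stay ∧ (M.δ q σ τ γ).dW = Dir.stay) ∧
    (γ = M.blank → (M.δ q σ τ γ).st = q)

end AuxSDA

/-! ### Two-way multi-head deterministic depth-`k` storage automata -/

structure MOut (Q G ℓ : ℕ) where
  st : Fin Q
  wr : Fin G
  dIn : Fin ℓ → Dir
  dSt : Dir

/-- A two-way `ℓ`-head deterministic depth-`k` storage automaton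
(`k`-sda₂(ℓ)): `ℓ` two-way read-only input heads and one depth-`k`
storage tape. -/
structure MSDA (k ℓ : ℕ) (α : Type) where
  Q : ℕ
  G : ℕ
  dv : Fin G → ℕ
  box : Fin G
  blank : Fin G
  lend : Fin G
  q0 : Fin Q
  qacc : Finset (Fin Q)
  qrej : Finset (Fin Q)
  δ : Fin Q → (Fin ℓ → InSym α) → Fin G → MOut Q G ℓ

namespace MSDA

variable {k ℓ : ℕ} {α : Type}

structure Cfg (M : MSDA k ℓ α) where
  st : Fin M.Q
  ips : Fin ℓ → ℕ
  sp : ℕ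
  tape : ℕ → Fin M.G

def init (M : MSDA k ℓ α) : M.Cfg :=
  ⟨M.q0, fun _ => 0, 0, fun i => if i = 0 then M.lend else M.box⟩

def Halted (M : MSDA k ℓ α) (c : M.Cfg) : Prop := c.st ∈ M.qacc ∨ c.st ∈ M.qrej

def step (M : MSDA k ℓ α) (x : List α) (c : M.Cfg) : M.Cfg :=
  if c.st ∈ M.qacc ∨ c.st ∈ M.qrej then c
  else
    let t := M.δ c.st (fun i => inAt x (c.ips i)) (c.tape c.sp)
    ⟨t.st, fun i => moveIn x.length (c.ips i) (t.dIn i), moveNat c.sp t.dSt,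
      Function.update c.tape c.sp t.wr⟩

def run (M : MSDA k ℓ α) (x : List α) (t : ℕ) : M.Cfg := (M.step x)^[t] M.init

def Accepts (M : MSDA k ℓ α) (x : List α) : Prop := ∃ t, (M.run x t).st ∈ M.qacc

def Rejects (M : MSDA k ℓ α) (x : List α) : Prop := ∃ t, (M.run x t).st ∈ M.qrej

def Halts (M : MSDA k ℓ α) (x : List α) : Prop := ∃ t, M.Halted (M.run x t)

def Recognizes (M : MSDA k ℓ α) (L : Language α) : Prop :=
  ∀ x, (x ∈ L ↔ M.Accepts x) ∧ (x ∉ L ↔ M.Rejects x)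

def PolyTime (M : MSDA k ℓ α) : Prop :=
  ∃ c : ℕ, ∀ x : List α, ∃ t ≤ c * x.length ^ c + c, M.Halted (M.run x t)

def WellFormed (M : MSDA k ℓ α) : Prop :=
  (∀ s, M.dv s ≤ k) ∧ M.dv M.box = 0 ∧ M.dv M.blank = k ∧ M.dv M.lend = k ∧
  M.blank ≠ M.lend ∧
  ∀ q σ γ,
    ((M.δ q σ γ).wr = M.lend ↔ γ = M.lend) ∧
    (γ = M.lend → (M.δ q σ γ).dSt ≠ Dir.left) ∧
    (M.dv γ = k → (M.δ q σ γ).wr = γ) ∧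
    ((M.δ q σ γ).dSt = Dir.stay → (M.δ q σ γ).wr = γ) ∧
    (M.dv γ < k → (M.δ q σ γ).dSt = Dir.right →
      M.dv (M.δ q σ γ).wr = min (M.dv γ + if Even (M.dv γ) then 1 else 2) k) ∧
    (M.dv γ < k → (M.δ q σ γ).dSt = Dir.left →
      M.dv (M.δ q σ γ).wr = min (M.dv γ + if Even (M.dv γ) then 2 else 1) k) ∧
    (M.dv (M.δ q σ γ).wr = k → (M.δ q σ γ).wr = M.lend ∨ (M.δ q σ γ).wr = M.blank)

/-- Depth-susceptibility: all input heads are stationary while the storage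
head scans a symbol of depth `≥ k-1`, and the state is unchanged while
scanning the frozen blank. -/
def DepthSusceptible (M : MSDA k ℓ α) : Prop :=
  ∀ q σ γ,
    (k - 1 ≤ M.dv γ → ∀ i, (M.δ q σ γ).dIn i = Dir.stay) ∧
    (γ = M.blank → (M.δ q σ γ).st = q)

/-- Head `h` is a counter head: the transition function ignores the symbol
it scans, and the storage-tape head stays still whenever head `h` moves. -/
def CounterHead (M : MSDA k ℓ α) (h : Fin ℓ) : Prop :=
  (∀ q σ σ' γ, (∀ i, i ≠ h → σ i = σ' i) → M.δ q σ γ = M.δ q σ' γ) ∧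
  (∀ q σ γ, (M.δ q σ γ).dIn h ≠ Dir.stay → (M.δ q σ γ).dSt = Dir.stay)

/-- Head `h` never moves to the left. -/
def OneWayHead (M : MSDA k ℓ α) (h : Fin ℓ) : Prop :=
  ∀ q σ γ, (M.δ q σ γ).dIn h ≠ Dir.left

end MSDA

/-- `kSDA₂(ℓ)`: languages recognized in polynomial time by depth-immune
two-way `ℓ`-head deterministic depth-`k` storage automata. -/
def kSDA2 (k ℓ : ℕ) (α : Type) : Set (Language α) :=
  {L | ∃ M : MSDA k ℓ α, M.WellFormed ∧ M.PolyTime ∧ M.Recognizes L}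

/-! ### Hibbard's deterministic k-limited automata -/

structure LDAOut (Q G : ℕ) where
  st : Fin Q
  wr : Fin G
  d : Dir

/-- A deterministic `k`-limited automaton: a single-tape two-way machine
whose tape initially holds `▷ x ◁`; each cell may be rewritten only during
its first `k` visits (a turn counts twice), tracked by the graded tape
alphabet. -/
structure LDA (k : ℕ) (α : Type) where
  Q : ℕ
  G : ℕ
  dv : Fin G → ℕ
  embed : α → Fin G     -- input symbols, of depth 0
  lend : Fin G          -- `▷`, frozen
  rend : Fin G          -- `◁`, frozen
  q0 : Fin Q
  qacc : Finset (Fin Q)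
  qrej : Finset (Fin Q)
  δ : Fin Q → Fin G → LDAOut Q G

namespace LDA

variable {k : ℕ} {α : Type}

structure Cfg (M : LDA k α) where
  st : Fin M.Q
  p : ℕ
  tape : ℕ → Fin M.G

def init (M : LDA k α) (x : List α) : M.Cfg :=
  ⟨M.q0, 0, fun i =>
    if i = 0 then M.lend
    else if h : i - 1 < x.length then M.embed (x.get ⟨i - 1, h⟩)
    else M.rend⟩

def Halted (M : LDA k α) (c : M.Cfg) : Prop := c.st ∈ M.qacc ∨ c.st ∈ M.qrej

def step (M : LDA k α) (c : M.Cfg) : M.Cfg :=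
  if c.st ∈ M.qacc ∨ c.st ∈ M.qrej then c
  else
    let t := M.δ c.st (c.tape c.p)
    ⟨t.st, moveNat c.p t.d, Function.update c.tape c.p t.wr⟩

def run (M : LDA k α) (x : List α) (t : ℕ) : M.Cfg := M.step^[t] (M.init x)

def Accepts (M : LDA k α) (x : List α) : Prop := ∃ t, (M.run x t).st ∈ M.qacc

def Rejects (M : LDA k α) (x : List α) : Prop := ∃ t, (M.run x t).st ∈ M.qrej

def Recognizes (M : LDA k α) (L : Language α) : Prop :=
  ∀ x, (x ∈ L ↔ M.Accepts x) ∧ (x ∉ L ↔ M.Rejects x)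

def WellFormed (M : LDA k α) : Prop :=
  (∀ s, M.dv s ≤ k) ∧ (∀ a, M.dv (M.embed a) = 0) ∧
  M.dv M.lend = k ∧ M.dv M.rend = k ∧ M.lend ≠ M.rend ∧
  ∀ q γ,
    ((M.δ q γ).wr = M.lend ↔ γ = M.lend) ∧
    ((M.δ q γ).wr = M.rend ↔ γ = M.rend) ∧
    (γ = M.lend → (M.δ q γ).d ≠ Dir.left) ∧
    (γ = M.rend → (M.δ q γ).d ≠ Dir.right) ∧
    (M.dv γ = k → (M.δ q γ).wr = γ) ∧
    ((M.δ q γ).d = Dir.stay → (M.δ q γ).wr = γ) ∧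
    (M.dv γ < k → (M.δ q γ).d = Dir.right →
      M.dv (M.δ q γ).wr = min (M.dv γ + if Even (M.dv γ) then 1 else 2) k) ∧
    (M.dv γ < k → (M.δ q γ).d = Dir.left →
      M.dv (M.δ q γ).wr = min (M.dv γ + if Even (M.dv γ) then 2 else 1) k)

end LDA

/-! ### Encodings of k-sda's and the membership problem MEMB_k -/

/-- An encoding scheme: a map sending every depth-susceptible k-sda over an
alphabet `Fin a` together with an input to a binary string. -/
def EncInjective {k : ℕ}
    (enc : (a : ℕ) → SDA k (Fin a) → List (Fin a) → List Bool) : Prop :=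
  Function.Injective
    (fun p : (a : ℕ) × (SDA k (Fin a) × List (Fin a)) => enc p.1 p.2.1 p.2.2)

/-- The membership problem `MEMB_k` relative to an encoding scheme. -/
def MEMB (k : ℕ)
    (enc : (a : ℕ) → SDA k (Fin a) → List (Fin a) → List Bool) : Language Bool :=
  {y | ∃ (a : ℕ) (M : SDA k (Fin a)) (x : List (Fin a)),
    M.WellFormed ∧ M.DepthSusceptible ∧ y = enc a M x ∧ M.Accepts x}

end SDAP

/-!
Let `T` be a logspace transducer computing `f`. Since `M` reads its input once, from left to
right, `f x` can be streamed to it instead of being stored: the simulator keeps the storage tape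
of `M`, uses its auxiliary tape as the work tape of `T`, and each time `M` advances its input head
it resumes `T` until `T` emits the next symbol of `f x`. Depth-susceptibility of `M` makes `M`
advance its input head only while scanning a storage cell of depth `< k - 1`, so the simulator
moves its input and auxiliary heads only on such cells, as it must. Each simulator step increases
`5 tM + 3 tT + rank` (`tM`, `tT` the numbers of simulated steps of `M` and `T`), so the simulator
halts within `5 nM + 3 nT + 3` steps when `T` halts after `nT` and `M` after `nM` steps.
-/

namespace SDAP

theorem mul_pow_add_le_mul_succ_pow (c n : ℕ) : c * n ^ c + c ≤ 2 * c * (n + 1) ^ c := by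
  have h1 : n ^ c ≤ (n + 1) ^ c := Nat.pow_le_pow_left n.le_succ c
  have h2 : 1 ≤ (n + 1) ^ c := Nat.one_le_pow _ _ n.succ_pos
  nlinarith

theorem exists_mul_succ_pow_le (C E : ℕ) : ∃ c, ∀ n, C * (n + 1) ^ E ≤ c * n ^ c + c := by
  refine ⟨C * 2 ^ E + E, fun n => ?_⟩
  rcases Nat.eq_zero_or_pos n with rfl | hn
  · have : C ≤ C * 2 ^ E := Nat.le_mul_of_pos_right C (by positivity)
    simp only [zero_add, one_pow, mul_one]
    omega
  · calc C * (n + 1) ^ E ≤ C * (2 ^ E * n ^ (C * 2 ^ E + E)) := by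
          gcongr
          calc (n + 1) ^ E ≤ (2 * n) ^ E := by gcongr; omega
            _ = 2 ^ E * n ^ E := mul_pow 2 n E
            _ ≤ 2 ^ E * n ^ (C * 2 ^ E + E) := by gcongr; omega
      _ ≤ (C * 2 ^ E + E) * n ^ (C * 2 ^ E + E) := by
          rw [← mul_assoc]; gcongr; omega
      _ ≤ _ := Nat.le_add_right _ _

theorem exists_poly_bound_of_comp (cT cM : ℕ) :
    ∃ c, ∀ n nT m nM : ℕ, nT ≤ cT * n ^ cT + cT → m ≤ nT → nM ≤ cM * m ^ cM + cM →
      5 * nM + 3 * nT + 3 ≤ c * n ^ c + c := by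
  obtain ⟨c, hc⟩ :=
    exists_mul_succ_pow_le (10 * cM * (2 * cT + 1) ^ cM + 6 * cT + 3) (cT * cM + cT)
  refine ⟨c, fun n nT m nM hnT hmn hnM => le_trans ?_ (hc n)⟩
  set P := n + 1
  have hP : 1 ≤ P := n.succ_pos
  have hnT' : nT ≤ 2 * cT * P ^ cT := hnT.trans (mul_pow_add_le_mul_succ_pow cT n)
  have hm : m + 1 ≤ (2 * cT + 1) * P ^ cT := by
    have := Nat.one_le_pow cT P hP
    nlinarith
  have hnM' : nM ≤ 2 * cM * ((2 * cT + 1) ^ cM * P ^ (cT * cM)) :=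
    calc nM ≤ 2 * cM * (m + 1) ^ cM := hnM.trans (mul_pow_add_le_mul_succ_pow cM m)
      _ ≤ 2 * cM * ((2 * cT + 1) * P ^ cT) ^ cM := by gcongr
      _ = _ := by rw [mul_pow, ← pow_mul]
  have e1 : P ^ (cT * cM) ≤ P ^ (cT * cM + cT) := Nat.pow_le_pow_right hP (by omega)
  have e2 : P ^ cT ≤ P ^ (cT * cM + cT) := Nat.pow_le_pow_right hP (by omega)
  have e3 : 1 ≤ P ^ (cT * cM + cT) := Nat.one_le_pow _ _ hP
  calc 5 * nM + 3 * nT + 3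
      ≤ 10 * cM * (2 * cT + 1) ^ cM * P ^ (cT * cM) + 6 * cT * P ^ cT + 3 := by nlinarith
    _ ≤ 10 * cM * (2 * cT + 1) ^ cM * P ^ (cT * cM + cT) + 6 * cT * P ^ (cT * cM + cT) +
          3 * P ^ (cT * cM + cT) :=
        Nat.add_le_add (Nat.add_le_add (Nat.mul_le_mul_left _ e1) (Nat.mul_le_mul_left _ e2))
          (by omega)
    _ = _ := by ring

instance : Fintype Dir :=
  ⟨{Dir.left, Dir.stay, Dir.right}, fun d => by cases d <;> simp⟩

instance (Q G : ℕ) : Finite (SDAOut Q G) :=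
  Finite.of_equiv (Fin Q × Fin G × Dir × Dir)
    { toFun := fun p => ⟨p.1, p.2.1, p.2.2.1, p.2.2.2⟩
      invFun := fun o => (o.st, o.wr, o.dIn, o.dSt)
      left_inv := fun _ => rfl
      right_inv := fun _ => rfl }

theorem inAt_of_length_lt {γ : Type} {y : List γ} {i : ℕ} (h : y.length < i) :
    inAt y i = InSym.rend := by
  rw [inAt, if_neg (by omega), dif_neg (by omega)]

theorem inAt_length_add_one {γ : Type} {y l : List γ} {b : γ} (h : l ++ [b] <+: y) :
    inAt y (l.length + 1) = InSym.sym b := by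
  have hlt : l.length < y.length := by simpa using h.length_le
  rw [inAt, if_neg (by omega), Nat.add_sub_cancel, dif_pos hlt, List.get_eq_getElem,
    ← h.getElem (by simp)]
  simp

theorem inAt_min_length_add_one {γ : Type} (y : List γ) (i : ℕ) :
    inAt y (min i y.length + 1) = inAt y (i + 1) := by
  rcases le_total i y.length with h | h
  · rw [min_eq_left h]
  · rw [min_eq_right h, inAt_of_length_lt (by omega), inAt_of_length_lt (by omega)]

namespace SDA

variable {k : ℕ} {α : Type} (M : SDA k α)

theorem run_succ (x : List α) (t : ℕ) : M.run x (t + 1) = M.step x (M.run x t) :=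
  Function.iterate_succ_apply' _ _ _

theorem step_of_halted (x : List α) {c : M.Cfg} (h : M.Halted c) : M.step x c = c :=
  if_pos h

theorem run_eq_of_halted {x : List α} {s u : ℕ} (h : M.Halted (M.run x s)) (hsu : s ≤ u) :
    M.run x u = M.run x s := by
  obtain ⟨j, rfl⟩ := Nat.exists_eq_add_of_le hsu
  rw [run, add_comm, Function.iterate_add_apply]
  exact Function.iterate_fixed (M.step_of_halted x h) j

theorem run_eq_of_halted_of_halted {x : List α} {s u : ℕ} (hs : M.Halted (M.run x s))
    (hu : M.Halted (M.run x u)) : M.run x s = M.run x u := by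
  rcases le_total s u with h | h
  · exact (M.run_eq_of_halted hs h).symm
  · exact M.run_eq_of_halted hu h

theorem lt_of_halted_of_not_halted {x : List α} {s u : ℕ} (hu : M.Halted (M.run x u))
    (hs : ¬ M.Halted (M.run x s)) : s < u := by
  by_contra h
  exact hs (M.run_eq_of_halted hu (not_lt.1 h) ▸ hu)

theorem run_succ_of_not_halted {x : List α} {t : ℕ} (h : ¬ M.Halted (M.run x t)) :
    M.run x (t + 1) =
      let c := M.run x t
      let o := M.δ c.st (inAt x c.ip) (c.tape c.sp)
      ⟨o.st, moveIn x.length c.ip o.dIn, moveNat c.sp o.dSt,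
        Function.update c.tape c.sp o.wr⟩ := by
  rw [run_succ]
  exact if_neg h

theorem ip_run_succ_of_not_halted {x : List α} {t : ℕ} (h : ¬ M.Halted (M.run x t)) :
    (M.run x (t + 1)).ip = moveIn x.length (M.run x t).ip
      (M.δ (M.run x t).st (inAt x (M.run x t).ip) ((M.run x t).tape (M.run x t).sp)).dIn := by
  rw [run_succ_of_not_halted M h]

theorem ip_run_le (x : List α) (t : ℕ) : (M.run x t).ip ≤ x.length + 1 := by
  induction t with
  | zero => exact Nat.zero_le _
  | succ t ih =>
    rw [run_succ, step]
    split
    · exact ih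
    · exact min_le_right _ _

theorem eq_lend_or_eq_blank_of_dv_eq (hwf : M.WellFormed) {γ : Fin M.G} (hγ : M.dv γ = k) :
    γ = M.lend ∨ γ = M.blank := by
  obtain ⟨-, -, -, -, -, hδ⟩ := hwf
  obtain ⟨-, -, -, hfix, -, -, -, hk⟩ := hδ M.q0 InSym.lend γ
  rw [hfix hγ] at hk
  exact hk hγ

end SDA

namespace TransTM

variable {α β : Type} (T : TransTM α β)

theorem run_succ (x : List α) (t : ℕ) : T.run x (t + 1) = T.step x (T.run x t) :=
  Function.iterate_succ_apply' _ _ _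

theorem step_of_halted (x : List α) {c : T.Cfg} (h : c.st ∈ T.qhalt) : T.step x c = c :=
  if_pos h

theorem run_eq_of_halted {x : List α} {s u : ℕ} (h : (T.run x s).st ∈ T.qhalt)
    (hsu : s ≤ u) :
    T.run x u = T.run x s := by
  obtain ⟨j, rfl⟩ := Nat.exists_eq_add_of_le hsu
  rw [run, add_comm, Function.iterate_add_apply]
  exact Function.iterate_fixed (T.step_of_halted x h) j

theorem lt_of_halted_of_not_halted {x : List α} {s u : ℕ} (hu : (T.run x u).st ∈ T.qhalt)
    (hs : (T.run x s).st ∉ T.qhalt) : s < u := by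
  by_contra h
  exact hs (T.run_eq_of_halted hu (not_lt.1 h) ▸ hu)

theorem run_succ_of_not_halted {x : List α} {t : ℕ} (h : (T.run x t).st ∉ T.qhalt) :
    T.run x (t + 1) =
      let c := T.run x t
      let o := T.δ c.st (inAt x c.ip) (c.w c.wp)
      ⟨o.st, moveIn x.length c.ip o.dIn, moveNat c.wp o.dW, Function.update c.w c.wp o.wr,
        c.out ++ o.out.toList⟩ := by
  rw [run_succ]
  exact if_neg h

theorem out_prefix_out_of_le (x : List α) {s u : ℕ} (hsu : s ≤ u) :
    (T.run x s).out <+: (T.run x u).out := by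
  induction u, hsu using Nat.le_induction with
  | base => exact List.prefix_refl _
  | succ u _ ih =>
    refine ih.trans ?_
    rw [run_succ, step]
    split
    · exact List.prefix_refl _
    · exact List.prefix_append _ _

theorem length_out_run_le (x : List α) (t : ℕ) : (T.run x t).out.length ≤ t := by
  induction t with
  | zero => exact Nat.le_refl 0
  | succ t ih =>
    rw [run_succ, step]
    split
    · omega
    · simp only [List.length_append]
      have : (Option.toList (T.δ (T.run x t).st (inAt x (T.run x t).ip)
          ((T.run x t).w (T.run x t).wp)).out).length ≤ 1 := by
        cases (T.δ _ _ _).out <;> simp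
      omega

theorem ip_run_le (x : List α) (t : ℕ) : (T.run x t).ip ≤ x.length + 1 := by
  induction t with
  | zero => exact Nat.zero_le _
  | succ t ih =>
    rw [run_succ, step]
    split
    · exact ih
    · exact min_le_right _ _

variable {x : List α} {y : List β} {nT : ℕ}

theorem out_prefix_of_out_eq (hnT : (T.run x nT).st ∈ T.qhalt) (hy : (T.run x nT).out = y)
    (t : ℕ) : (T.run x t).out <+: y := by
  rcases le_total t nT with h | h
  · exact hy ▸ T.out_prefix_out_of_le x h
  · rw [T.run_eq_of_halted hnT h, hy]

theorem out_eq_of_halted (hnT : (T.run x nT).st ∈ T.qhalt) (hy : (T.run x nT).out = y)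
    {s : ℕ} (hs : (T.run x s).st ∈ T.qhalt) : (T.run x s).out = y := by
  rcases le_total s nT with h | h
  · rw [← hy, T.run_eq_of_halted hs h]
  · rw [T.run_eq_of_halted hnT h, hy]

variable {T} in
theorem Computes.out_eq_of_halted {f : List α → List β} (hfc : T.Computes f)
    {s : ℕ} (hs : (T.run x s).st ∈ T.qhalt) : (T.run x s).out = f x := by
  obtain ⟨t, hth, hty⟩ := hfc x
  exact T.out_eq_of_halted hth hty hs

end TransTM

namespace AuxSDA

variable {k : ℕ} {α : Type} (N : AuxSDA k α)

theorem run_succ (x : List α) (t : ℕ) : N.run x (t + 1) = N.step x (N.run x t) :=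
  Function.iterate_succ_apply' _ _ _

theorem step_of_halted (x : List α) {c : N.Cfg} (h : N.Halted c) : N.step x c = c :=
  if_pos h

theorem step_of_not_halted {x : List α} {c : N.Cfg} (h : ¬ N.Halted c) :
    N.step x c =
      let o := N.δ c.st (inAt x c.ip) (c.w c.wp) (c.tape c.sp)
      ⟨o.st, moveIn x.length c.ip o.dIn, moveNat c.wp o.dW, moveNat c.sp o.dSt,
        Function.update c.w c.wp o.wrW, Function.update c.tape c.sp o.wrG⟩ :=
  if_neg h

end AuxSDA

noncomputable section

section Simulator

variable {k : ℕ} {α β : Type} (T : TransTM α β) (M : SDA k β)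

/-- The transition tables `q γ ↦ M.δ q σ γ` of the input symbols `σ`. There are finitely
many, although `β` may be infinite, so the simulator keeps the table of the scanned symbol of
`f x` in its finite control instead of the symbol itself. -/
abbrev InTable : Type := Set.range fun (σ : InSym β) (q : Fin M.Q) (γ : Fin M.G) => M.δ q σ γ

def tableOf (σ : InSym β) : InTable M := ⟨_, σ, rfl⟩

@[simp]
theorem tableOf_apply (σ : InSym β) (q : Fin M.Q) (γ : Fin M.G) :
    (tableOf M σ).1 q γ = M.δ q σ γ :=
  rfl

theorem InTable.exists_eq (d : InTable M) : ∃ σ, ∀ q γ, d.1 q γ = M.δ q σ γ := by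
  obtain ⟨σ, hσ⟩ := d.2
  exact ⟨σ, fun q γ => by rw [← hσ]⟩

/-- Phases of the simulation of `M` on `f x`. In `ready` the simulator runs `M` as long as its
input head stays; when `M` is about to advance it, `fetch` runs the transducer until it emits the
next symbol of `f x` (or halts: then the next symbol is `◁`), and `commit d` performs the pending
step of `M` and installs the table `d` of the new symbol. An auxiliary head may only write while
moving, so a transducer step that writes in place is simulated by a step to the right followed by
`ret`, a step back. -/
inductive Phase (B : Type)
  | ready
  | fetch
  | ret (next : Option B)
  | commit (next : B)

namespace Phase

instance (B : Type) [Finite B] : Finite (Phase B) :=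
  Finite.of_equiv (Bool ⊕ Option B ⊕ B)
    { toFun := fun
        | .inl true => ready
        | .inl false => fetch
        | .inr (.inl o) => ret o
        | .inr (.inr d) => commit d
      invFun := fun
        | ready => .inl true
        | fetch => .inl false
        | ret o => .inr (.inl o)
        | commit d => .inr (.inr d)
      left_inv := by rintro ((_ | _) | o | d) <;> rfl
      right_inv := by rintro (_ | _ | o | d) <;> rfl }

variable {B : Type}

def afterEmit : Option B → Phase B
  | none => fetch
  | some d => commit d

def wpOffset : Phase B → ℕ
  | ready => 0
  | fetch => 0
  | ret _ => 1
  | commit _ => 0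

@[simp]
theorem wpOffset_afterEmit (next : Option B) : (afterEmit next).wpOffset = 0 := by
  cases next <;> rfl

def rank : Phase B → ℕ
  | ready => 0
  | fetch => 2
  | ret _ => 1
  | commit _ => 3

theorem rank_le_three (ph : Phase B) : ph.rank ≤ 3 := by
  cases ph <;> simp [rank]

end Phase

open Phase

abbrev SimState : Type := Phase (InTable M) × Fin T.Q × Fin M.Q × InTable M

def encode : SimState T M ≃ Fin (Nat.card (SimState T M)) := Finite.equivFin _

structure SimOut where
  st : SimState T M
  wrW : Fin T.W
  wrG : Fin M.G
  dIn : Dir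
  dW : Dir
  dSt : Dir

/- The idle branches guarded by `k - 1 ≤ M.dv γ` and `γ = M.blank` are never taken in a
simulation (see `Pending`); they make the simulator depth-susceptible. -/
open Classical in
def simδ : SimState T M → InSym α → Fin T.W → Fin M.G → SimOut T M
  | (ready, qT, qM, cur), _, τ, γ =>
      let o := cur.1 qM γ
      if o.dIn = .right then ⟨(fetch, qT, qM, cur), τ, γ, .stay, .stay, .stay⟩
      else ⟨(ready, qT, o.st, cur), τ, o.wr, .stay, .stay, o.dSt⟩
  | (fetch, qT, qM, cur), σ, τ, γ =>
      if k - 1 ≤ M.dv γ then ⟨(fetch, qT, qM, cur), τ, γ, .stay, .stay, .stay⟩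
      else if qT ∈ T.qhalt then
        ⟨(commit (tableOf M .rend), qT, qM, cur), τ, γ, .stay, .stay, .stay⟩
      else
        let u := T.δ qT σ τ
        let next := u.out.map fun b => tableOf M (.sym b)
        if u.dW = .stay then ⟨(ret next, u.st, qM, cur), u.wr, γ, u.dIn, .right, .stay⟩
        else ⟨(afterEmit next, u.st, qM, cur), u.wr, γ, u.dIn, u.dW, .stay⟩
  | (ret next, qT, qM, cur), _, τ, γ =>
      if k - 1 ≤ M.dv γ then ⟨(ret next, qT, qM, cur), τ, γ, .stay, .stay, .stay⟩
      else ⟨(afterEmit next, qT, qM, cur), τ, γ, .stay, .left, .stay⟩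
  | (commit d, qT, qM, cur), _, τ, γ =>
      if γ = M.blank then ⟨(commit d, qT, qM, cur), τ, γ, .stay, .stay, .stay⟩
      else
        let o := cur.1 qM γ
        ⟨(ready, qT, o.st, d), τ, o.wr, .stay, .stay, o.dSt⟩

open Classical in
def simulator : AuxSDA k α where
  Q := Nat.card (SimState T M)
  W := T.W
  G := M.G
  dv := M.dv
  box := M.box
  blank := M.blank
  lend := M.lend
  wblank := T.blank
  q0 := encode T M (ready, T.q0, M.q0, tableOf M .lend)
  qacc := Finset.univ.filter fun q => ((encode T M).symm q).2.2.1 ∈ M.qacc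
  -- `M.qacc` and `M.qrej` may overlap; acceptance takes precedence, as in `M.lang`.
  qrej := Finset.univ.filter fun q => ((encode T M).symm q).2.2.1 ∈ M.qrej \ M.qacc
  δ q σ τ γ :=
    let o := simδ T M ((encode T M).symm q) σ τ γ
    ⟨encode T M o.st, o.wrW, o.wrG, o.dIn, o.dW, o.dSt⟩

variable {T M}

theorem simδ_storage (s : SimState T M) (σ : InSym α) (τ : Fin T.W) (γ : Fin M.G) :
    (simδ T M s σ τ γ).wrG = γ ∧ (simδ T M s σ τ γ).dSt = .stay ∨
      ∃ σ', (simδ T M s σ τ γ).wrG = (M.δ s.2.2.1 σ' γ).wr ∧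
        (simδ T M s σ τ γ).dSt = (M.δ s.2.2.1 σ' γ).dSt := by
  obtain ⟨ph, qT, qM, cur⟩ := s
  obtain ⟨σ', hσ'⟩ := cur.exists_eq
  cases ph <;> simp only [simδ] <;> split_ifs <;>
    first | exact Or.inl ⟨rfl, rfl⟩ | exact Or.inr ⟨σ', by rw [hσ'], by rw [hσ']⟩

theorem simδ_wrW (s : SimState T M) (σ : InSym α) (τ : Fin T.W) (γ : Fin M.G)
    (h : (simδ T M s σ τ γ).dW = .stay) : (simδ T M s σ τ γ).wrW = τ := by
  obtain ⟨ph, qT, qM, cur⟩ := s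
  cases ph <;> simp only [simδ] at h ⊢ <;> split_ifs at h ⊢ <;> simp_all

theorem simδ_stationary (s : SimState T M) (σ : InSym α) (τ : Fin T.W) (γ : Fin M.G)
    (h : k - 1 ≤ M.dv γ) :
    (simδ T M s σ τ γ).dIn = .stay ∧ (simδ T M s σ τ γ).dW = .stay := by
  obtain ⟨ph, qT, qM, cur⟩ := s
  cases ph <;> simp only [simδ] <;> split_ifs <;> simp_all

theorem simδ_blank (hwf : M.WellFormed) (hds : M.DepthSusceptible) (s : SimState T M)
    (σ : InSym α) (τ : Fin T.W) : (simδ T M s σ τ M.blank).st = s := by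
  obtain ⟨ph, qT, qM, cur⟩ := s
  obtain ⟨σ', hσ'⟩ := cur.exists_eq
  have hdv : k - 1 ≤ M.dv M.blank := by rw [hwf.2.2.1]; omega
  cases ph <;> simp [simδ, hσ', hdv, (hds qM σ' M.blank).1 hdv, (hds qM σ' M.blank).2 rfl]

theorem simulator_halted_iff {c : (simulator T M).Cfg} {s : SimState T M}
    (hc : c.st = encode T M s) :
    (simulator T M).Halted c ↔ s.2.2.1 ∈ M.qacc ∨ s.2.2.1 ∈ M.qrej := by
  rw [AuxSDA.Halted, hc]
  erw [Finset.mem_filter_univ, Finset.mem_filter_univ, Equiv.symm_apply_apply, Finset.mem_sdiff]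
  tauto

variable (T M)

theorem simulator_wellFormed (hwf : M.WellFormed) : (simulator T M).WellFormed := by
  obtain ⟨hdv, hbox, hblank, hlend, hne, hδ⟩ := hwf
  refine ⟨hdv, hbox, hblank, hlend, hne, fun q σ τ γ => ?_⟩
  dsimp only [simulator]
  have hW := simδ_wrW ((encode T M).symm q) σ τ γ
  rcases simδ_storage ((encode T M).symm q) σ τ γ with ⟨hwr, hd⟩ | ⟨σ', hwr, hd⟩
  · rw [hwr, hd]
    exact ⟨Iff.rfl, by simp, fun _ => rfl, fun _ => rfl, hW, by simp, by simp,
      M.eq_lend_or_eq_blank_of_dv_eq ⟨hdv, hbox, hblank, hlend, hne, hδ⟩⟩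
  · rw [hwr, hd]
    obtain ⟨-, h1, h2, h3, h4, h5, h6, h7⟩ := hδ ((encode T M).symm q).2.2.1 σ' γ
    exact ⟨h1, h2, h3, h4, hW, h5, h6, h7⟩

theorem simulator_depthSusceptible (hwf : M.WellFormed) (hds : M.DepthSusceptible) :
    (simulator T M).DepthSusceptible := by
  refine fun q σ τ γ => ⟨simδ_stationary _ σ τ γ, ?_⟩
  rintro rfl
  obtain ⟨s, rfl⟩ := (encode T M).surjective q
  change encode T M (simδ T M ((encode T M).symm (encode T M s)) σ τ M.blank).st = _
  rw [Equiv.symm_apply_apply]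
  exact congrArg (encode T M) (simδ_blank hwf hds s σ τ)

variable (x : List α) (y : List β)

def simCfg (tT tM : ℕ) (ph : Phase (InTable M)) : (simulator T M).Cfg :=
  let cT := T.run x tT
  let cM := M.run y tM
  ⟨encode T M (ph, cT.st, cM.st, tableOf M (inAt y cM.ip)), cT.ip, cT.wp + ph.wpOffset, cM.sp,
    cT.w, cM.tape⟩

variable {x y}

theorem not_halted_simCfg {tT tM : ℕ} {ph : Phase (InTable M)} (hM : ¬ M.Halted (M.run y tM)) :
    ¬ (simulator T M).Halted (simCfg T M x y tT tM ph) := by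
  rwa [simulator_halted_iff rfl]

theorem step_simCfg_ready_of_stay {tT tM : ℕ} (hM : ¬ M.Halted (M.run y tM))
    (hstay : (M.δ (M.run y tM).st (inAt y (M.run y tM).ip)
      ((M.run y tM).tape (M.run y tM).sp)).dIn = .stay) :
    (simulator T M).step x (simCfg T M x y tT tM ready) = simCfg T M x y tT (tM + 1) ready := by
  rw [(simulator T M).step_of_not_halted (not_halted_simCfg T M hM)]
  simp only [simCfg]
  rw [SDA.run_succ_of_not_halted M hM]
  simp [simulator, simδ, hstay, moveIn, moveNat, wpOffset, T.ip_run_le, M.ip_run_le]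

theorem step_simCfg_ready_of_right {tT tM : ℕ} (hM : ¬ M.Halted (M.run y tM))
    (hright : (M.δ (M.run y tM).st (inAt y (M.run y tM).ip)
      ((M.run y tM).tape (M.run y tM).sp)).dIn = .right) :
    (simulator T M).step x (simCfg T M x y tT tM ready) = simCfg T M x y tT tM fetch := by
  rw [(simulator T M).step_of_not_halted (not_halted_simCfg T M hM)]
  simp [simCfg, simulator, simδ, hright, moveIn, moveNat, wpOffset, T.ip_run_le]

theorem step_simCfg_fetch_of_halted {tT tM : ℕ} (hM : ¬ M.Halted (M.run y tM))
    (hlow : ¬ k - 1 ≤ M.dv ((M.run y tM).tape (M.run y tM).sp))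
    (hT : (T.run x tT).st ∈ T.qhalt) :
    (simulator T M).step x (simCfg T M x y tT tM fetch) =
      simCfg T M x y tT tM (commit (tableOf M .rend)) := by
  rw [(simulator T M).step_of_not_halted (not_halted_simCfg T M hM)]
  simp [simCfg, simulator, simδ, hlow, hT, moveIn, moveNat, wpOffset, T.ip_run_le]

theorem step_simCfg_fetch_of_stay {tT tM : ℕ} (hM : ¬ M.Halted (M.run y tM))
    (hlow : ¬ k - 1 ≤ M.dv ((M.run y tM).tape (M.run y tM).sp))
    (hT : (T.run x tT).st ∉ T.qhalt)
    (hstay : (T.δ (T.run x tT).st (inAt x (T.run x tT).ip)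
      ((T.run x tT).w (T.run x tT).wp)).dW = .stay) :
    (simulator T M).step x (simCfg T M x y tT tM fetch) =
      simCfg T M x y (tT + 1) tM (ret ((T.δ (T.run x tT).st (inAt x (T.run x tT).ip)
        ((T.run x tT).w (T.run x tT).wp)).out.map fun b => tableOf M (.sym b))) := by
  rw [(simulator T M).step_of_not_halted (not_halted_simCfg T M hM)]
  simp only [simCfg]
  rw [T.run_succ_of_not_halted hT]
  simp [simulator, simδ, hlow, hT, hstay, moveIn, moveNat, wpOffset]

theorem step_simCfg_fetch_of_move {tT tM : ℕ} (hM : ¬ M.Halted (M.run y tM))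
    (hlow : ¬ k - 1 ≤ M.dv ((M.run y tM).tape (M.run y tM).sp))
    (hT : (T.run x tT).st ∉ T.qhalt)
    (hmove : (T.δ (T.run x tT).st (inAt x (T.run x tT).ip)
      ((T.run x tT).w (T.run x tT).wp)).dW ≠ .stay) :
    (simulator T M).step x (simCfg T M x y tT tM fetch) =
      simCfg T M x y (tT + 1) tM (afterEmit ((T.δ (T.run x tT).st (inAt x (T.run x tT).ip)
        ((T.run x tT).w (T.run x tT).wp)).out.map fun b => tableOf M (.sym b))) := by
  rw [(simulator T M).step_of_not_halted (not_halted_simCfg T M hM)]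
  simp only [simCfg, wpOffset_afterEmit]
  rw [T.run_succ_of_not_halted hT]
  simp [simulator, simδ, hlow, hT, hmove, moveIn, moveNat, wpOffset]

theorem step_simCfg_ret {tT tM : ℕ} {next : Option (InTable M)} (hM : ¬ M.Halted (M.run y tM))
    (hlow : ¬ k - 1 ≤ M.dv ((M.run y tM).tape (M.run y tM).sp)) :
    (simulator T M).step x (simCfg T M x y tT tM (ret next)) =
      simCfg T M x y tT tM (afterEmit next) := by
  rw [(simulator T M).step_of_not_halted (not_halted_simCfg T M hM)]
  simp only [simCfg, wpOffset_afterEmit]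
  simp [simulator, simδ, hlow, moveIn, moveNat, wpOffset, T.ip_run_le]

theorem step_simCfg_commit {tT tM : ℕ} (hM : ¬ M.Halted (M.run y tM))
    (hblank : (M.run y tM).tape (M.run y tM).sp ≠ M.blank)
    (hright : (M.δ (M.run y tM).st (inAt y (M.run y tM).ip)
      ((M.run y tM).tape (M.run y tM).sp)).dIn = .right) :
    (simulator T M).step x
        (simCfg T M x y tT tM (commit (tableOf M (inAt y ((M.run y tM).ip + 1))))) =
      simCfg T M x y tT (tM + 1) ready := by
  rw [(simulator T M).step_of_not_halted (not_halted_simCfg T M hM)]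
  simp only [simCfg]
  rw [SDA.run_succ_of_not_halted M hM]
  simp [simulator, simδ, hblank, hright, moveIn, moveNat, wpOffset, T.ip_run_le,
    inAt_min_length_add_one]

variable (x y)

/-- The symbol at position `j + 1` of the input tape `▷ y ◁` of `M` is the next symbol the
transducer will emit, or `◁` and the transducer has halted. -/
def Emitted (tT j : ℕ) : Prop :=
  (T.run x tT).out.length = j ∧ j ≤ y.length ∨ y.length < j ∧ (T.run x tT).st ∈ T.qhalt

def Pending (tM : ℕ) : Prop :=
  let c := M.run y tM
  (M.δ c.st (inAt y c.ip) (c.tape c.sp)).dIn = .right ∧ M.dv (c.tape c.sp) + 1 < k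

def NextInv (tT tM : ℕ) : Option (InTable M) → Prop
  | none => Emitted T x y tT (M.run y tM).ip
  | some d =>
    d = tableOf M (inAt y ((M.run y tM).ip + 1)) ∧ Emitted T x y tT ((M.run y tM).ip + 1)

def PhaseInv (tT tM : ℕ) : Phase (InTable M) → Prop
  | ready => Emitted T x y tT (M.run y tM).ip
  | fetch => Pending M y tM ∧ NextInv T M x y tT tM none
  | ret next => Pending M y tM ∧ NextInv T M x y tT tM next
  | commit d => Pending M y tM ∧ NextInv T M x y tT tM (some d)

def SimStep (tT tM : ℕ) (ph : Phase (InTable M)) (tT' tM' : ℕ) (ph' : Phase (InTable M)) :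
    Prop :=
  (simulator T M).step x (simCfg T M x y tT tM ph) = simCfg T M x y tT' tM' ph' ∧
    PhaseInv T M x y tT' tM' ph' ∧
    5 * tM + 3 * tT + ph.rank < 5 * tM' + 3 * tT' + ph'.rank ∧
    (tT' = tT ∨ tT' = tT + 1 ∧ (T.run x tT).st ∉ T.qhalt)

variable {T M x y}

theorem phaseInv_afterEmit {tT tM : ℕ} {next : Option (InTable M)} :
    PhaseInv T M x y tT tM (afterEmit next) ↔ Pending M y tM ∧ NextInv T M x y tT tM next := by
  cases next <;> rfl

theorem exists_simStep_ready (hwf : M.WellFormed) (hds : M.DepthSusceptible) {tT tM : ℕ}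
    (hinv : PhaseInv T M x y tT tM ready) (hM : ¬ M.Halted (M.run y tM)) :
    ∃ tT' tM' ph', SimStep T M x y tT tM ready tT' tM' ph' := by
  set c := M.run y tM with hc
  by_cases hright : (M.δ c.st (inAt y c.ip) (c.tape c.sp)).dIn = .right
  · have hlow : M.dv (c.tape c.sp) + 1 < k := by
      by_contra hhigh
      rw [(hds _ _ _).1 (by omega)] at hright
      exact absurd hright (by decide)
    exact ⟨tT, tM, fetch, step_simCfg_ready_of_right T M hM hright,
      ⟨⟨hright, hlow⟩, hinv⟩, by simp [rank], Or.inl rfl⟩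
  · have hstay : (M.δ c.st (inAt y c.ip) (c.tape c.sp)).dIn = .stay := by
      have := (hwf.2.2.2.2.2 c.st (inAt y c.ip) (c.tape c.sp)).1
      cases h : (M.δ c.st (inAt y c.ip) (c.tape c.sp)).dIn <;> simp_all
    have hip : (M.run y (tM + 1)).ip = c.ip := by
      rw [M.ip_run_succ_of_not_halted hM, ← hc, hstay]
      exact min_eq_left (M.ip_run_le y tM)
    refine ⟨tT, tM + 1, ready, step_simCfg_ready_of_stay T M hM hstay, ?_, by simp [rank],
      Or.inl rfl⟩
    rw [PhaseInv, hip]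
    exact hinv

variable {nT : ℕ}

theorem nextInv_succ (hnT : (T.run x nT).st ∈ T.qhalt) (hy : (T.run x nT).out = y) {tT tM : ℕ}
    (hT : (T.run x tT).st ∉ T.qhalt) (hlen : (T.run x tT).out.length = (M.run y tM).ip)
    (hle : (M.run y tM).ip ≤ y.length) :
    NextInv T M x y (tT + 1) tM ((T.δ (T.run x tT).st (inAt x (T.run x tT).ip)
      ((T.run x tT).w (T.run x tT).wp)).out.map fun b => tableOf M (.sym b)) := by
  have hpre := T.out_prefix_of_out_eq hnT hy (tT + 1)
  have hout := congrArg TransTM.Cfg.out (T.run_succ_of_not_halted hT)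
  rcases ho : (T.δ (T.run x tT).st (inAt x (T.run x tT).ip) ((T.run x tT).w (T.run x tT).wp)).out
    with _ | b
  · refine Or.inl ⟨?_, hle⟩
    simp [hout, ho, hlen]
  · simp only [hout, ho, Option.toList_some] at hpre
    have hlt := hpre.length_le
    simp only [List.length_append, List.length_singleton, hlen] at hlt
    refine ⟨?_, Or.inl ⟨by simp [hout, ho, hlen], hlt⟩⟩
    rw [← hlen, inAt_length_add_one hpre]

theorem exists_simStep_fetch (hnT : (T.run x nT).st ∈ T.qhalt) (hy : (T.run x nT).out = y)
    {tT tM : ℕ} (hinv : PhaseInv T M x y tT tM fetch) (hM : ¬ M.Halted (M.run y tM)) :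
    ∃ tT' tM' ph', SimStep T M x y tT tM fetch tT' tM' ph' := by
  obtain ⟨hpend, hE⟩ := hinv
  have hlow : ¬ k - 1 ≤ M.dv ((M.run y tM).tape (M.run y tM).sp) := by
    have := hpend.2; omega
  by_cases hT : (T.run x tT).st ∈ T.qhalt
  · have hlt : y.length < (M.run y tM).ip + 1 := by
      rcases hE with ⟨hlen, -⟩ | ⟨hlt, -⟩
      · rw [T.out_eq_of_halted hnT hy hT] at hlen
        omega
      · omega
    refine ⟨tT, tM, commit (tableOf M .rend), step_simCfg_fetch_of_halted T M hM hlow hT,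
      ⟨hpend, by rw [inAt_of_length_lt hlt], Or.inr ⟨hlt, hT⟩⟩, by simp [rank],
      Or.inl rfl⟩
  obtain ⟨hlen, hle⟩ := hE.resolve_right fun h => hT h.2
  have hnext := nextInv_succ hnT hy hT hlen hle
  by_cases hstay : (T.δ (T.run x tT).st (inAt x (T.run x tT).ip)
      ((T.run x tT).w (T.run x tT).wp)).dW = .stay
  · exact ⟨tT + 1, tM, _, step_simCfg_fetch_of_stay T M hM hlow hT hstay, ⟨hpend, hnext⟩,
      by simp [rank]; omega, Or.inr ⟨rfl, hT⟩⟩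
  · refine ⟨tT + 1, tM, _, step_simCfg_fetch_of_move T M hM hlow hT hstay,
      phaseInv_afterEmit.2 ⟨hpend, hnext⟩, ?_, Or.inr ⟨rfl, hT⟩⟩
    cases (T.δ (T.run x tT).st (inAt x (T.run x tT).ip) ((T.run x tT).w (T.run x tT).wp)).out <;>
      simp [afterEmit, rank]

theorem exists_simStep_ret {tT tM : ℕ} {next : Option (InTable M)}
    (hinv : PhaseInv T M x y tT tM (ret next)) (hM : ¬ M.Halted (M.run y tM)) :
    ∃ tT' tM' ph', SimStep T M x y tT tM (ret next) tT' tM' ph' := by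
  have hlow : ¬ k - 1 ≤ M.dv ((M.run y tM).tape (M.run y tM).sp) := by
    have := hinv.1.2; omega
  refine ⟨tT, tM, afterEmit next, step_simCfg_ret T M hM hlow, phaseInv_afterEmit.2 hinv, ?_,
    Or.inl rfl⟩
  cases next <;> simp [afterEmit, rank]

theorem exists_simStep_commit (hwf : M.WellFormed) {tT tM : ℕ} {d : InTable M}
    (hinv : PhaseInv T M x y tT tM (commit d)) (hM : ¬ M.Halted (M.run y tM)) :
    ∃ tT' tM' ph', SimStep T M x y tT tM (commit d) tT' tM' ph' := by
  obtain ⟨⟨hright, hlow⟩, rfl, hE⟩ := hinv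
  have hblank : (M.run y tM).tape (M.run y tM).sp ≠ M.blank := by
    intro h
    rw [h, hwf.2.2.1] at hlow
    omega
  have hip : (M.run y (tM + 1)).ip = min ((M.run y tM).ip + 1) (y.length + 1) := by
    rw [M.ip_run_succ_of_not_halted hM, hright]
    rfl
  refine ⟨tT, tM + 1, ready, step_simCfg_commit T M hM hblank hright, ?_,
    by simp [rank]; omega, Or.inl rfl⟩
  rw [PhaseInv, hip]
  rcases le_total ((M.run y tM).ip + 1) (y.length + 1) with h | h
  · rwa [min_eq_left h]
  · rw [min_eq_right h]
    rcases hE with ⟨-, h'⟩ | ⟨-, hT⟩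
    · omega
    · exact Or.inr ⟨by omega, hT⟩

theorem exists_simStep (hwf : M.WellFormed) (hds : M.DepthSusceptible)
    (hnT : (T.run x nT).st ∈ T.qhalt) (hy : (T.run x nT).out = y) {tT tM : ℕ}
    {ph : Phase (InTable M)} (hinv : PhaseInv T M x y tT tM ph) (hM : ¬ M.Halted (M.run y tM)) :
    ∃ tT' tM' ph', SimStep T M x y tT tM ph tT' tM' ph' := by
  cases ph with
  | ready => exact exists_simStep_ready hwf hds hinv hM
  | fetch => exact exists_simStep_fetch hnT hy hinv hM
  | ret next => exact exists_simStep_ret hinv hM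
  | commit d => exact exists_simStep_commit hwf hinv hM

theorem exists_run_eq_simCfg (hwf : M.WellFormed) (hds : M.DepthSusceptible)
    (hnT : (T.run x nT).st ∈ T.qhalt) (hy : (T.run x nT).out = y) (t : ℕ) :
    ∃ tT tM ph, (simulator T M).run x t = simCfg T M x y tT tM ph ∧
      PhaseInv T M x y tT tM ph ∧ tT ≤ nT ∧
      ((simulator T M).Halted ((simulator T M).run x t) ∨ t ≤ 5 * tM + 3 * tT + ph.rank) := by
  induction t with
  | zero =>
    exact ⟨0, 0, ready, rfl, Or.inl ⟨rfl, Nat.zero_le _⟩, Nat.zero_le _, by simp [rank]⟩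
  | succ t ih =>
    obtain ⟨tT, tM, ph, hrun, hinv, hle, hpot⟩ := ih
    rw [AuxSDA.run_succ]
    by_cases hN : (simulator T M).Halted ((simulator T M).run x t)
    · rw [AuxSDA.step_of_halted _ x hN]
      exact ⟨tT, tM, ph, hrun, hinv, hle, Or.inl hN⟩
    have hM : ¬ M.Halted (M.run y tM) := by rwa [hrun, simulator_halted_iff rfl] at hN
    obtain ⟨tT', tM', ph', hstep, hinv', hlt, hT'⟩ := exists_simStep hwf hds hnT hy hinv hM
    have := hpot.resolve_left hN
    refine ⟨tT', tM', ph', hrun ▸ hstep, hinv', ?_, Or.inr (by omega)⟩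
    rcases hT' with rfl | ⟨rfl, hT⟩
    · exact hle
    · exact T.lt_of_halted_of_not_halted hnT hT

theorem exists_run_eq_simCfg_of_halted (hwf : M.WellFormed) (hds : M.DepthSusceptible)
    (hnT : (T.run x nT).st ∈ T.qhalt) (hy : (T.run x nT).out = y) {nM : ℕ}
    (hnM : M.Halted (M.run y nM)) :
    ∃ tT tM ph, (simulator T M).run x (5 * nM + 3 * nT + 3) = simCfg T M x y tT tM ph ∧
      M.Halted (M.run y tM) := by
  obtain ⟨tT, tM, ph, hrun, -, hle, hpot⟩ :=
    exists_run_eq_simCfg hwf hds hnT hy (5 * nM + 3 * nT + 3)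
  refine ⟨tT, tM, ph, hrun, by_contra fun hM => ?_⟩
  have hN : ¬ (simulator T M).Halted ((simulator T M).run x (5 * nM + 3 * nT + 3)) := by
    rwa [hrun, simulator_halted_iff rfl]
  have := hpot.resolve_left hN
  have := M.lt_of_halted_of_not_halted hnM hM
  have := rank_le_three ph
  omega

theorem halted_run_simulator (hwf : M.WellFormed) (hds : M.DepthSusceptible)
    (hnT : (T.run x nT).st ∈ T.qhalt) (hy : (T.run x nT).out = y) {nM : ℕ}
    (hnM : M.Halted (M.run y nM)) :
    (simulator T M).Halted ((simulator T M).run x (5 * nM + 3 * nT + 3)) := by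
  obtain ⟨tT, tM, ph, hrun, hM⟩ := exists_run_eq_simCfg_of_halted hwf hds hnT hy hnM
  rwa [hrun, simulator_halted_iff rfl]

theorem mem_qacc_simCfg {tT tM : ℕ} {ph : Phase (InTable M)} :
    (simCfg T M x y tT tM ph).st ∈ (simulator T M).qacc ↔ (M.run y tM).st ∈ M.qacc := by
  erw [Finset.mem_filter_univ, Equiv.symm_apply_apply]

theorem mem_qrej_simCfg {tT tM : ℕ} {ph : Phase (InTable M)} :
    (simCfg T M x y tT tM ph).st ∈ (simulator T M).qrej ↔
      (M.run y tM).st ∈ M.qrej ∧ (M.run y tM).st ∉ M.qacc := by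
  erw [Finset.mem_filter_univ, Equiv.symm_apply_apply, Finset.mem_sdiff]

variable {nM : ℕ}

theorem accepts_simulator_iff (hwf : M.WellFormed) (hds : M.DepthSusceptible)
    (hnT : (T.run x nT).st ∈ T.qhalt) (hy : (T.run x nT).out = y)
    (hnM : M.Halted (M.run y nM)) : (simulator T M).Accepts x ↔ M.Accepts y := by
  constructor
  · rintro ⟨t, ht⟩
    obtain ⟨tT, tM, ph, hrun, -⟩ := exists_run_eq_simCfg hwf hds hnT hy t
    rw [hrun, mem_qacc_simCfg] at ht
    exact ⟨tM, ht⟩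
  · rintro ⟨s, hs⟩
    obtain ⟨tT, tM, ph, hrun, hM⟩ := exists_run_eq_simCfg_of_halted hwf hds hnT hy hnM
    refine ⟨_, hrun ▸ mem_qacc_simCfg.2 ?_⟩
    rwa [M.run_eq_of_halted_of_halted hM (Or.inl hs)]

theorem rejects_simulator_iff (hwf : M.WellFormed) (hds : M.DepthSusceptible)
    (hnT : (T.run x nT).st ∈ T.qhalt) (hy : (T.run x nT).out = y)
    (hnM : M.Halted (M.run y nM)) : (simulator T M).Rejects x ↔ ¬ M.Accepts y := by
  constructor
  · rintro ⟨t, ht⟩ ⟨s, hs⟩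
    obtain ⟨tT, tM, ph, hrun, -⟩ := exists_run_eq_simCfg hwf hds hnT hy t
    rw [hrun, mem_qrej_simCfg] at ht
    exact ht.2 (M.run_eq_of_halted_of_halted (Or.inr ht.1) (Or.inl hs) ▸ hs)
  · intro hacc
    obtain ⟨tT, tM, ph, hrun, hM⟩ := exists_run_eq_simCfg_of_halted hwf hds hnT hy hnM
    have hrej := hM.resolve_left fun h => hacc ⟨tM, h⟩
    exact ⟨_, hrun ▸ mem_qrej_simCfg.2 ⟨hrej, fun h => hacc ⟨tM, h⟩⟩⟩

theorem exists_wp_run_simulator_le (hwf : M.WellFormed) (hds : M.DepthSusceptible)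
    (hnT : (T.run x nT).st ∈ T.qhalt) (hy : (T.run x nT).out = y) (t : ℕ) :
    ∃ tT, ((simulator T M).run x t).wp ≤ (T.run x tT).wp + 1 := by
  obtain ⟨tT, tM, ph, hrun, -⟩ := exists_run_eq_simCfg hwf hds hnT hy t
  refine ⟨tT, ?_⟩
  rw [hrun]
  cases ph <;> simp [simCfg, wpOffset]

end Simulator

end

end SDAP

open SDAP in
/-- Given `f ∈ FL` and a polynomial-time depth-susceptible
`k`-sda `M`, the language `{ x | f(x) ∈ L(M) }` is recognized by some
logarithmic-space auxiliary depth-`k` storage automaton in polynomial time. -/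
theorem FL_then_kSDA_gives_auxSDA (k : ℕ) (α β : Type)
    (f : List α → List β) (hf : InFL f)
    (M : SDA k β) (hwf : M.WellFormed) (hds : M.DepthSusceptible)
    (hpt : M.PolyTime) :
    ∃ N : AuxSDA k α, N.WellFormed ∧ N.DepthSusceptible ∧
      N.PolyTime ∧ N.LogSpace ∧
      N.Recognizes {x : List α | f x ∈ M.lang} := by
  obtain ⟨T, hfc, ⟨cT, hcT⟩, ⟨cL, hcL⟩⟩ := hf
  obtain ⟨cM, hcM⟩ := hpt
  refine ⟨simulator T M, simulator_wellFormed T M hwf, simulator_depthSusceptible T M hwf hds,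
    ?_, ⟨cL + 1, fun x t => ?_⟩, fun x => ?_⟩
  · obtain ⟨c, hc⟩ := exists_poly_bound_of_comp cT cM
    refine ⟨c, fun x => ?_⟩
    obtain ⟨nT, hnT_le, hnT⟩ := hcT x
    obtain ⟨nM, hnM_le, hnM⟩ := hcM (f x)
    have hlen : (f x).length ≤ nT := hfc.out_eq_of_halted hnT ▸ T.length_out_run_le x nT
    exact ⟨_, hc _ _ _ _ hnT_le hlen hnM_le,
      halted_run_simulator hwf hds hnT (hfc.out_eq_of_halted hnT) hnM⟩
  · obtain ⟨nT, -, hnT⟩ := hcT x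
    obtain ⟨tT, hwp⟩ := exists_wp_run_simulator_le hwf hds hnT (hfc.out_eq_of_halted hnT) t
    have := hcL x tT
    nlinarith
  · obtain ⟨nT, -, hnT⟩ := hcT x
    obtain ⟨nM, -, hnM⟩ := hcM (f x)
    exact ⟨(accepts_simulator_iff hwf hds hnT (hfc.out_eq_of_halted hnT) hnM).symm,
      (rejects_simulator_iff hwf hds hnT (hfc.out_eq_of_halted hnT) hnM).symm⟩
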